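/- arXiv:2312.02223 — 7 statements merged into one kernel-verified Lean document; each statement's English description precedes it below -/
import Mathlib

section
/- Let x and y be nonzero complex numbers with x ≠ y and let n be a non-negative integer. Then Σ_{j=0}^{n} (xy)^j (x^{n-2j} + y^{n-2j}) = Σ_{j=0}^{n} ((x+y)/2)^j (x^{n-j} + y^{n-j}), and the common value of these two sums equals 2(x^{n+1} − y^{n+1})/(x − y). -/
open Finset

theorem sury_variant (x y : ℂ) (hx : x ≠ 0) (hy : y ≠ 0) (hxy : x ≠ y) (n : ℕ) :
    (∑ j ∈ Finset.range (n + 1),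
        (x * y) ^ j * (x ^ ((n : ℤ) - 2 * j) + y ^ ((n : ℤ) - 2 * j))
      = ∑ j ∈ Finset.range (n + 1),
        ((x + y) / 2) ^ j * (x ^ ((n : ℤ) - j) + y ^ ((n : ℤ) - j))) ∧
    (∑ j ∈ Finset.range (n + 1),
        (x * y) ^ j * (x ^ ((n : ℤ) - 2 * j) + y ^ ((n : ℤ) - 2 * j))
      = 2 * (x ^ (n + 1) - y ^ (n + 1)) / (x - y)) := by
  have hxy' : x - y ≠ 0 := sub_ne_zero.mpr hxy
  have K : ∀ a b : ℂ, (∑ i ∈ Finset.range (n + 1), a ^ i * b ^ (n - i)) * (a - b)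
      = a ^ (n + 1) - b ^ (n + 1) := by
    intro a b
    simpa using geom_sum₂_mul a b (n + 1)
  -- rewrite the first sum with natural powers
  have h1 : ∑ j ∈ Finset.range (n + 1),
      (x * y) ^ j * (x ^ ((n : ℤ) - 2 * j) + y ^ ((n : ℤ) - 2 * j))
      = ∑ j ∈ Finset.range (n + 1), (x ^ (n - j) * y ^ j + x ^ j * y ^ (n - j)) := by
    refine Finset.sum_congr rfl fun j hj => ?_
    have hjn : j ≤ n := by simpa [Nat.lt_succ_iff] using hj
    have e1 : (n : ℤ) - 2 * j = ((n - j : ℕ) : ℤ) - (j : ℤ) := by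
      push_cast [hjn]; ring
    rw [e1, zpow_sub₀ hx, zpow_sub₀ hy]
    simp only [zpow_natCast]
    field_simp
    ring
  -- rewrite the second sum with natural powers
  have h2 : ∑ j ∈ Finset.range (n + 1),
      ((x + y) / 2) ^ j * (x ^ ((n : ℤ) - j) + y ^ ((n : ℤ) - j))
      = ∑ j ∈ Finset.range (n + 1),
        (((x + y) / 2) ^ j * x ^ (n - j) + ((x + y) / 2) ^ j * y ^ (n - j)) := by
    refine Finset.sum_congr rfl fun j hj => ?_
    have hjn : j ≤ n := by simpa [Nat.lt_succ_iff] using hj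
    have e1 : (n : ℤ) - j = ((n - j : ℕ) : ℤ) := by push_cast [hjn]; ring
    rw [e1]
    simp only [zpow_natCast]
    ring
  -- first sum equals 2 * geometric sum
  have h3 : ∑ j ∈ Finset.range (n + 1), (x ^ (n - j) * y ^ j + x ^ j * y ^ (n - j))
      = 2 * ∑ j ∈ Finset.range (n + 1), x ^ j * y ^ (n - j) := by
    rw [Finset.sum_add_distrib]
    have hre : ∑ j ∈ Finset.range (n + 1), x ^ (n - j) * y ^ j
        = ∑ j ∈ Finset.range (n + 1), x ^ j * y ^ (n - j) := by
      rw [← Finset.sum_range_reflect (fun j => x ^ j * y ^ (n - j)) (n + 1)]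
      refine Finset.sum_congr rfl fun j hj => ?_
      have hjn : j ≤ n := by simpa [Nat.lt_succ_iff] using hj
      have : n + 1 - 1 - j = n - j := by omega
      rw [this, Nat.sub_sub_self hjn]
    rw [hre]; ring
  have hval : ∑ j ∈ Finset.range (n + 1),
      (x * y) ^ j * (x ^ ((n : ℤ) - 2 * j) + y ^ ((n : ℤ) - 2 * j))
      = 2 * (x ^ (n + 1) - y ^ (n + 1)) / (x - y) := by
    rw [h1, h3, eq_div_iff hxy']
    have G := K x y
    linear_combination 2 * G
  refine ⟨?_, hval⟩
  rw [hval, h2, Finset.sum_add_distrib, div_eq_iff hxy']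
  have Gx := K ((x + y) / 2) x
  have Gy := K ((x + y) / 2) y
  linear_combination (2 : ℂ) * Gx - 2 * Gy
end

section
/- For every nonzero integer r and every non-negative integer n, Σ_{j=0}^{n} (−1)^{rj} L_{r(n−2j)} = Σ_{j=0}^{n} (L_r/2)^j L_{r(n−j)}, and the common value of these two sums equals 2·F_{r(n+1)}/F_r. -/
open Finset

/-- Integer-indexed Fibonacci numbers: `fibZ n = F n`, with
`F (-n) = (-1)^(n+1) * F n`. -/
def fibZ (n : ℤ) : ℤ :=
  if 0 ≤ n then (Nat.fib n.toNat : ℤ) else (-1) ^ (n.natAbs + 1) * (Nat.fib n.natAbs : ℤ)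

/-- Integer-indexed Lucas numbers: `lucZ n = L n = F (n+1) + F (n-1)`. -/
def lucZ (n : ℤ) : ℤ := fibZ (n + 1) + fibZ (n - 1)

/-! The identities `F_r L_m = F_{m+r} - (-1)^r F_{m-r}` and `2 F_{m+r} = F_r L_m + L_r F_m`
hold for all integers `m`, because each side is a Fibonacci-like sequence in `m` and the two
sides agree at `m = 0, 1`.
Multiplied by `F_r`, the `j`-th term of the first sum is therefore `g j - g (j+1)` with
`g j = (-1)^{rj} F_{r(n+1-2j)}`, and that of the second is `h j - h (j+1)` with
`h j = 2 (L_r/2)^j F_{r(n+1-j)}`; both sums telescope to `2 F_{r(n+1)}`. -/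

def IsFibLike {G : Type*} [AddCommGroup G] (s : ℤ → G) : Prop :=
  ∀ n, s (n + 2) = s (n + 1) + s n

namespace IsFibLike

variable {G : Type*} [AddCommGroup G] {s t : ℤ → G}

lemma add (hs : IsFibLike s) (ht : IsFibLike t) : IsFibLike (fun n => s n + t n) := by
  intro n
  dsimp only
  rw [hs n, ht n]
  abel

lemma sub (hs : IsFibLike s) (ht : IsFibLike t) : IsFibLike (fun n => s n - t n) := by
  intro n
  dsimp only
  rw [hs n, ht n]
  abel

lemma comp_add (hs : IsFibLike s) (k : ℤ) : IsFibLike (fun n => s (n + k)) := by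
  intro n
  simpa only [add_right_comm n _ k] using hs (n + k)

lemma comp_sub (hs : IsFibLike s) (k : ℤ) : IsFibLike (fun n => s (n - k)) := by
  simpa only [sub_eq_add_neg] using hs.comp_add (-k)

lemma const_mul {R : Type*} [Ring R] {s : ℤ → R} (hs : IsFibLike s) (c : R) :
    IsFibLike (fun n => c * s n) := by
  intro n
  dsimp only
  rw [hs n, mul_add]

lemma ext (hs : IsFibLike s) (ht : IsFibLike t) (h0 : s 0 = t 0) (h1 : s 1 = t 1) :
    s = t := by
  have key : ∀ n : ℤ, s n = t n ∧ s (n + 1) = t (n + 1) := by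
    intro n
    induction n using Int.induction_on with
    | zero => exact ⟨h0, h1⟩
    | succ i ih =>
      refine ⟨ih.2, ?_⟩
      rw [add_assoc, one_add_one_eq_two, hs, ht, ih.1, ih.2]
    | pred i ih =>
      refine ⟨?_, by simpa using ih.1⟩
      have hs' := hs (-i - 1)
      have ht' := ht (-i - 1)
      rw [show -(i : ℤ) - 1 + 2 = -i + 1 by ring, show -(i : ℤ) - 1 + 1 = -i by ring] at hs' ht'
      rw [← add_right_inj (s (-i)), ← hs', ih.1, ih.2, ht']
  exact funext fun n => (key n).1

end IsFibLike

lemma fibZ_natCast (m : ℕ) : fibZ m = Nat.fib m := by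
  simp [fibZ]

lemma fibZ_neg_natCast (m : ℕ) : fibZ (-m) = (-1) ^ (m + 1) * Nat.fib m := by
  rcases m with _ | k
  · simp [fibZ]
  · rw [fibZ, if_neg (by omega), show (-((k + 1 : ℕ) : ℤ)).natAbs = k + 1 by omega]

lemma fibZ_neg (n : ℤ) : fibZ (-n) = -(n.negOnePow * fibZ n) := by
  obtain ⟨m, rfl | rfl⟩ := n.eq_nat_or_neg
  · rw [fibZ_neg_natCast, fibZ_natCast, Int.coe_negOnePow_natCast]
    ring
  · rw [neg_neg, fibZ_natCast, fibZ_neg_natCast, Int.negOnePow_neg, Int.coe_negOnePow_natCast,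
      ← mul_assoc, ← pow_add, Odd.neg_one_pow ⟨m, by ring⟩]
    ring

lemma fibZ_isFibLike : IsFibLike fibZ := by
  intro n
  obtain ⟨m, rfl | rfl⟩ := n.eq_nat_or_neg
  · rw [show (m : ℤ) + 2 = ((m + 2 : ℕ) : ℤ) by push_cast; ring,
      show (m : ℤ) + 1 = ((m + 1 : ℕ) : ℤ) by push_cast; ring,
      fibZ_natCast, fibZ_natCast, fibZ_natCast, Nat.fib_add_two]
    push_cast
    ring
  · match m with
    | 0 => decide
    | 1 => decide
    | k + 2 =>
      rw [show -((k + 2 : ℕ) : ℤ) + 2 = -k by push_cast; ring,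
        show -((k + 2 : ℕ) : ℤ) + 1 = -((k + 1 : ℕ) : ℤ) by push_cast; ring,
        fibZ_neg_natCast, fibZ_neg_natCast, fibZ_neg_natCast, Nat.fib_add_two (n := k)]
      push_cast
      ring

lemma lucZ_isFibLike : IsFibLike lucZ :=
  (fibZ_isFibLike.comp_add 1).add (fibZ_isFibLike.comp_sub 1)

lemma fibZ_ne_zero {r : ℤ} (hr : r ≠ 0) : fibZ r ≠ 0 := by
  have hfib : (Nat.fib r.natAbs : ℤ) ≠ 0 := by
    exact_mod_cast (Nat.fib_pos.2 (Int.natAbs_pos.2 hr)).ne'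
  obtain ⟨m, rfl | rfl⟩ := r.eq_nat_or_neg
  · simpa [fibZ_natCast] using hfib
  · simpa [fibZ_neg_natCast] using hfib

lemma fibZ_zero : fibZ 0 = 0 := by decide

lemma fibZ_one : fibZ 1 = 1 := by decide

lemma lucZ_zero : lucZ 0 = 2 := by decide

lemma lucZ_one : lucZ 1 = 1 := by decide

lemma fibZ_add_one (n : ℤ) : fibZ (n + 1) = fibZ n + fibZ (n - 1) := by
  simpa [sub_add_cancel, sub_add_eq_add_sub, add_sub_assoc] using fibZ_isFibLike (n - 1)

lemma coe_negOnePow_mul_self (n : ℤ) : (n.negOnePow : ℤ) * n.negOnePow = 1 := by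
  rw [← Units.val_mul, Int.units_mul_self, Units.val_one]

lemma fibZ_mul_lucZ (r m : ℤ) :
    fibZ r * lucZ m = fibZ (m + r) - r.negOnePow * fibZ (m - r) := by
  refine congrFun (IsFibLike.ext (s := fun m => fibZ r * lucZ m)
    (lucZ_isFibLike.const_mul _)
    ((fibZ_isFibLike.comp_add r).sub ((fibZ_isFibLike.comp_sub r).const_mul _)) ?_ ?_) m
  · rw [lucZ_zero, zero_add, zero_sub, fibZ_neg]
    linear_combination -fibZ r * coe_negOnePow_mul_self r
  · rw [lucZ_one, show 1 - r = -(r - 1) by ring, fibZ_neg, Int.negOnePow_sub, Int.negOnePow_one,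
      add_comm, fibZ_add_one]
    push_cast
    linear_combination fibZ (r - 1) * coe_negOnePow_mul_self r

lemma two_mul_fibZ_add (r m : ℤ) :
    2 * fibZ (m + r) = fibZ r * lucZ m + lucZ r * fibZ m := by
  refine congrFun (IsFibLike.ext (s := fun m => 2 * fibZ (m + r))
    ((fibZ_isFibLike.comp_add r).const_mul _)
    ((lucZ_isFibLike.const_mul _).add (fibZ_isFibLike.const_mul _)) ?_ ?_) m
  · rw [lucZ_zero, zero_add, fibZ_zero]
    ring
  · rw [lucZ_one, fibZ_one, lucZ, add_comm, fibZ_add_one]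
    ring

lemma neg_one_zpow_mul_fibZ_neg (k : ℤ) : (-1 : ℚ) ^ k * fibZ (-k) = -fibZ k := by
  rw [fibZ_neg]
  push_cast
  rw [Int.cast_negOnePow, mul_neg, ← mul_assoc, ← mul_zpow]
  norm_num

lemma sum_neg_one_zpow_mul_lucZ_mul_fibZ (r : ℤ) (n : ℕ) :
    (∑ j ∈ range (n + 1), (-1 : ℚ) ^ (r * (j : ℤ)) * (lucZ (r * ((n : ℤ) - 2 * j)) : ℚ)) * fibZ r
      = 2 * fibZ (r * ((n : ℤ) + 1)) := by
  let g : ℕ → ℚ := fun j => (-1 : ℚ) ^ (r * (j : ℤ)) * fibZ (r * ((n : ℤ) + 1 - 2 * j))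
  have hstep : ∀ j ∈ range (n + 1),
      (-1 : ℚ) ^ (r * (j : ℤ)) * (lucZ (r * ((n : ℤ) - 2 * j)) : ℚ) * fibZ r = g j - g (j + 1) := by
    intro j _
    have key := congrArg (Int.cast : ℤ → ℚ) (fibZ_mul_lucZ r (r * ((n : ℤ) - 2 * j)))
    push_cast [Int.cast_negOnePow] at key
    simp only [g]
    push_cast
    rw [show r * ((n : ℤ) + 1 - 2 * j) = r * (n - 2 * j) + r by ring,
      show r * ((n : ℤ) + 1 - 2 * (j + 1)) = r * (n - 2 * j) - r by ring,
      mul_add, mul_one, zpow_add₀ (by norm_num)]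
    linear_combination (-1 : ℚ) ^ (r * (j : ℤ)) * key
  have hg0 : g 0 = fibZ (r * ((n : ℤ) + 1)) := by simp [g]
  have hg_succ : g (n + 1) = -fibZ (r * ((n : ℤ) + 1)) := by
    simp only [g]
    push_cast
    rw [show r * ((n : ℤ) + 1 - 2 * (n + 1)) = -(r * (n + 1)) by ring, neg_one_zpow_mul_fibZ_neg]
  rw [sum_mul, sum_congr rfl hstep, sum_range_sub', hg0, hg_succ]
  ring

lemma sum_half_lucZ_pow_mul_lucZ_mul_fibZ (r : ℤ) (n : ℕ) :
    (∑ j ∈ range (n + 1), ((lucZ r : ℚ) / 2) ^ j * (lucZ (r * ((n : ℤ) - j)) : ℚ)) * fibZ r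
      = 2 * fibZ (r * ((n : ℤ) + 1)) := by
  let h : ℕ → ℚ := fun j => 2 * ((lucZ r : ℚ) / 2) ^ j * fibZ (r * ((n : ℤ) + 1 - j))
  have hstep : ∀ j ∈ range (n + 1),
      ((lucZ r : ℚ) / 2) ^ j * (lucZ (r * ((n : ℤ) - j)) : ℚ) * fibZ r = h j - h (j + 1) := by
    intro j _
    have key := congrArg (Int.cast : ℤ → ℚ) (two_mul_fibZ_add r (r * ((n : ℤ) - j)))
    push_cast at key
    simp only [h]
    push_cast
    rw [show r * ((n : ℤ) + 1 - j) = r * (n - j) + r by ring,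
      show r * ((n : ℤ) + 1 - (j + 1)) = r * (n - j) by ring, pow_succ]
    linear_combination (-((lucZ r : ℚ) / 2) ^ j) * key
  have hh0 : h 0 = 2 * fibZ (r * ((n : ℤ) + 1)) := by simp [h]
  have hh_succ : h (n + 1) = 0 := by simp [h, fibZ_zero]
  rw [sum_mul, sum_congr rfl hstep, sum_range_sub', hh0, hh_succ, sub_zero]

theorem thm1_fib_lucas_sums (r : ℤ) (hr : r ≠ 0) (n : ℕ) :
    (∑ j ∈ Finset.range (n + 1),
        (-1 : ℚ) ^ (r * (j : ℤ)) * (lucZ (r * ((n : ℤ) - 2 * j)) : ℚ)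
      = ∑ j ∈ Finset.range (n + 1),
        ((lucZ r : ℚ) / 2) ^ j * (lucZ (r * ((n : ℤ) - j)) : ℚ)) ∧
    (∑ j ∈ Finset.range (n + 1),
        (-1 : ℚ) ^ (r * (j : ℤ)) * (lucZ (r * ((n : ℤ) - 2 * j)) : ℚ)
      = 2 * (fibZ (r * ((n : ℤ) + 1)) : ℚ) / (fibZ r : ℚ)) := by
  have hFr : (fibZ r : ℚ) ≠ 0 := Int.cast_ne_zero.2 (fibZ_ne_zero hr)
  have hA := sum_neg_one_zpow_mul_lucZ_mul_fibZ r n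
  have hB := sum_half_lucZ_pow_mul_lucZ_mul_fibZ r n
  exact ⟨mul_right_cancel₀ hFr (hA.trans hB.symm), (eq_div_iff hFr).2 hA⟩
end

section
/- For every integer r and every non-negative integer n, Σ_{j=0}^{2n} (−1)^{j(r+1)} L_{2r(n−j)} = Σ_{j=0}^{n} (F_r/2)^{2j} 5^j L_{2r(n−j)} + Σ_{j=1}^{n} (F_r/2)^{2j−1} 5^j F_{r(2n−2j+1)}, and the common value of these expressions equals 2·L_{r(2n+1)}/L_r (note that L_r ≠ 0 for every integer r). -/
open Finset

/-
With `a = φ ^ r` and `b = ψ ^ r` (Binet) one has `L (r m) = a ^ m + b ^ m`,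
`√5 F (r m) = a ^ m - b ^ m`, `a b = (-1) ^ r` and `L r = a + b`.
The alternating sum is then `∑ (-b) ^ k a ^ (2n-k) + ∑ (-a) ^ k b ^ (2n-k)`, two geometric sums
each equal to `(a ^ (2n+1) + b ^ (2n+1)) / (a + b)`. In the second expression put
`d = √5 F r / 2 = (a - b) / 2`: its even and odd terms recombine into
`∑ d ^ k a ^ (2n-k) + ∑ (-d) ^ k b ^ (2n-k)`, geometric sums with `a - d = b + d = (a + b) / 2`,
so it has the same value. Finally `L r ≠ 0`, since `φ ^ r = -ψ ^ r` would give `φ ^ (4r) = 1`.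
-/

section GeomSum

theorem sum_range_two_mul_add_one {M : Type*} [AddCommMonoid M] (f : ℕ → M) (n : ℕ) :
    ∑ k ∈ range (2 * n + 1), f k =
      ∑ j ∈ range (n + 1), f (2 * j) + ∑ i ∈ range n, f (2 * i + 1) := by
  induction n with
  | zero => simp
  | succ n ih =>
    rw [show 2 * (n + 1) + 1 = 2 * n + 1 + 1 + 1 by ring, sum_range_succ, sum_range_succ, ih,
      sum_range_succ (fun j ↦ f (2 * j)) (n + 1), sum_range_succ (fun i ↦ f (2 * i + 1)) n,
      show 2 * (n + 1) = 2 * n + 1 + 1 by ring]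
    abel

theorem sum_Icc_one_eq_sum_range_succ {M : Type*} [AddCommMonoid M] (f : ℕ → M) (n : ℕ) :
    ∑ j ∈ Icc 1 n, f j = ∑ i ∈ range n, f (i + 1) := by
  rw [range_eq_Ico, sum_Ico_add', zero_add, Ico_add_one_right_eq_Icc]

variable {R : Type*} [CommRing R]

theorem add_mul_sum_neg_pow_mul_pow (a b : R) (n : ℕ) :
    (a + b) * ∑ k ∈ range (2 * n + 1), ((-b) ^ k * a ^ (2 * n - k) + (-a) ^ k * b ^ (2 * n - k))
      = 2 * (a ^ (2 * n + 1) + b ^ (2 * n + 1)) := by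
  have ha := geom_sum₂_mul (-b) a (2 * n + 1)
  have hb := geom_sum₂_mul (-a) b (2 * n + 1)
  simp only [add_tsub_cancel_right, (odd_two_mul_add_one n).neg_pow] at ha hb
  rw [sum_add_distrib]
  linear_combination -ha - hb

theorem add_mul_sum_pow_mul_pow_of_two_mul_eq_sub {a b d : R} (h : 2 * d = a - b) (n : ℕ) :
    (a + b) * ∑ k ∈ range (2 * n + 1), (d ^ k * a ^ (2 * n - k) + (-d) ^ k * b ^ (2 * n - k))
      = 2 * (a ^ (2 * n + 1) + b ^ (2 * n + 1)) := by
  have ha := geom_sum₂_mul d a (2 * n + 1)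
  have hb := geom_sum₂_mul (-d) b (2 * n + 1)
  simp only [add_tsub_cancel_right, (odd_two_mul_add_one n).neg_pow] at ha hb
  rw [sum_add_distrib]
  -- `a + b = 2 * (a - d) = 2 * (b + d)`, the two factors that `geom_sum₂_mul` produces
  linear_combination -2 * ha - 2 * hb
    + (∑ k ∈ range (2 * n + 1), d ^ k * a ^ (2 * n - k)
      - ∑ k ∈ range (2 * n + 1), (-d) ^ k * b ^ (2 * n - k)) * h

theorem add_mul_sum_even_odd_of_two_mul_eq_sub {a b d : R} (h : 2 * d = a - b) (n : ℕ) :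
    (a + b) * (∑ j ∈ range (n + 1), d ^ (2 * j) * (a ^ (2 * n - 2 * j) + b ^ (2 * n - 2 * j))
      + ∑ i ∈ range n,
          d ^ (2 * i + 1) * (a ^ (2 * n - (2 * i + 1)) - b ^ (2 * n - (2 * i + 1))))
      = 2 * (a ^ (2 * n + 1) + b ^ (2 * n + 1)) := by
  rw [← add_mul_sum_pow_mul_pow_of_two_mul_eq_sub h n, sum_range_two_mul_add_one]
  congr 2
  · refine sum_congr rfl fun j _ ↦ ?_
    rw [(even_two_mul j).neg_pow]
    ring
  · refine sum_congr rfl fun i _ ↦ ?_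
    rw [(odd_two_mul_add_one i).neg_pow]
    ring

end GeomSum

theorem neg_mul_pow_mul_zpow {K : Type*} [Field K] {a : K} (ha : a ≠ 0) (b : K) {n j : ℕ}
    (hj : j ≤ 2 * n) :
    (-(a * b)) ^ j * a ^ (2 * ((n : ℤ) - j)) = (-b) ^ j * a ^ (2 * n - j) := by
  have : 2 * ((n : ℤ) - j) = ((2 * n - j : ℕ) : ℤ) - j := by omega
  rw [this, zpow_sub₀ ha, zpow_natCast, zpow_natCast]
  field_simp
  ring

theorem add_mul_sum_neg_mul_pow_mul_zpow {K : Type*} [Field K] {a b : K} (ha : a ≠ 0)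
    (hb : b ≠ 0) (n : ℕ) :
    (a + b) * ∑ j ∈ range (2 * n + 1),
        (-(a * b)) ^ j * (a ^ (2 * ((n : ℤ) - j)) + b ^ (2 * ((n : ℤ) - j)))
      = 2 * (a ^ (2 * n + 1) + b ^ (2 * n + 1)) := by
  rw [← add_mul_sum_neg_pow_mul_pow a b n]
  refine congrArg _ (sum_congr rfl fun j hj ↦ ?_)
  have hj : j ≤ 2 * n := Nat.lt_succ_iff.mp (mem_range.mp hj)
  rw [mul_add, neg_mul_pow_mul_zpow ha b hj, mul_comm a b, neg_mul_pow_mul_zpow hb a hj]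

open Real goldenRatio

theorem fibZ_eq_intFib (n : ℤ) : fibZ n = Int.fib n := by
  obtain ⟨m, rfl | rfl⟩ := n.eq_nat_or_neg
  · simp [fibZ]
  · rcases m.eq_zero_or_pos with rfl | hm
    · rfl
    · rw [Int.fib_neg_natCast, fibZ, if_neg (by omega)]
      simp

theorem coe_fibZ_eq (n : ℤ) : (fibZ n : ℝ) = (φ ^ n - ψ ^ n) / √5 := by
  rw [fibZ_eq_intFib, coe_intFib_eq]

theorem coe_lucZ_eq (n : ℤ) : (lucZ n : ℝ) = φ ^ n + ψ ^ n := by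
  rw [lucZ, Int.cast_add, coe_fibZ_eq, coe_fibZ_eq, ← add_div, div_eq_iff (by positivity),
    zpow_add_one₀ goldenRatio_ne_zero, zpow_add_one₀ goldenConj_ne_zero,
    zpow_sub_one₀ goldenRatio_ne_zero, zpow_sub_one₀ goldenConj_ne_zero, inv_goldenRatio,
    inv_goldenConj, ← goldenRatio_sub_goldenConj]
  ring

theorem lucZ_ne_zero (n : ℤ) : lucZ n ≠ 0 := by
  intro h
  have hφψ : φ ^ n = -ψ ^ n := by
    have := coe_lucZ_eq n
    rw [h, Int.cast_zero] at this
    linear_combination -this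
  have : φ ^ (4 * n) = 1 := by
    calc φ ^ (4 * n) = (φ ^ n * φ ^ n) ^ 2 := by
          rw [← zpow_natCast, ← zpow_add₀ goldenRatio_ne_zero, ← zpow_mul]; ring_nf
      _ = ((φ * ψ) ^ n) ^ 2 := by rw [mul_zpow]; nth_rw 2 [hφψ]; ring
      _ = 1 := by
          rw [goldenRatio_mul_goldenConj, ← zpow_natCast, ← zpow_mul, mul_comm, zpow_mul]
          norm_num
  rw [zpow_eq_one_iff_right₀ goldenRatio_pos.le one_lt_goldenRatio.ne'] at this
  obtain rfl : n = 0 := by omega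
  exact absurd h (by decide)

theorem coe_lucZ_mul (r m : ℤ) : (lucZ (r * m) : ℝ) = (φ ^ r) ^ m + (ψ ^ r) ^ m := by
  rw [coe_lucZ_eq, zpow_mul, zpow_mul]

theorem coe_lucZ_mul_natCast (r : ℤ) (m : ℕ) :
    (lucZ (r * m) : ℝ) = (φ ^ r) ^ m + (ψ ^ r) ^ m := by
  rw [coe_lucZ_mul, zpow_natCast, zpow_natCast]

theorem sqrt_five_mul_coe_fibZ_mul_natCast (r : ℤ) (m : ℕ) :
    √5 * fibZ (r * m) = (φ ^ r) ^ m - (ψ ^ r) ^ m := by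
  rw [coe_fibZ_eq, zpow_mul, zpow_mul, zpow_natCast, zpow_natCast,
    mul_div_cancel₀ _ (by positivity)]

theorem alternating_lucZ_sum_mul_lucZ (r : ℤ) (n : ℕ) :
    (∑ j ∈ range (2 * n + 1),
        (-1 : ℚ) ^ ((j : ℤ) * (r + 1)) * (lucZ (2 * r * ((n : ℤ) - j)) : ℚ)) * lucZ r
      = 2 * lucZ (r * (2 * (n : ℤ) + 1)) := by
  apply Rat.cast_injective (α := ℝ)
  push_cast
  have hsign : (-1 : ℝ) ^ (r + 1) = -(φ ^ r * ψ ^ r) := by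
    rw [zpow_add_one₀ (by norm_num), ← mul_zpow, goldenRatio_mul_goldenConj]
    ring
  have hterm : ∀ j ∈ range (2 * n + 1),
      (-1 : ℝ) ^ ((j : ℤ) * (r + 1)) * lucZ (2 * r * ((n : ℤ) - j))
        = (-(φ ^ r * ψ ^ r)) ^ j
          * ((φ ^ r) ^ (2 * ((n : ℤ) - j)) + (ψ ^ r) ^ (2 * ((n : ℤ) - j))) := by
    intro j _
    rw [mul_comm (j : ℤ), zpow_mul, zpow_natCast, hsign, mul_comm 2 r, mul_assoc, coe_lucZ_mul]
  rw [sum_congr rfl hterm, coe_lucZ_eq,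
    show 2 * (n : ℤ) + 1 = (2 * n + 1 : ℕ) by push_cast; rfl, coe_lucZ_mul_natCast, mul_comm]
  exact add_mul_sum_neg_mul_pow_mul_zpow (zpow_ne_zero r goldenRatio_ne_zero)
    (zpow_ne_zero r goldenConj_ne_zero) n

theorem fibZ_lucZ_sum_mul_lucZ (r : ℤ) (n : ℕ) :
    ((∑ j ∈ range (n + 1),
          ((fibZ r : ℚ) / 2) ^ (2 * j) * 5 ^ j * (lucZ (2 * r * ((n : ℤ) - j)) : ℚ))
      + ∑ j ∈ Icc 1 n,
          ((fibZ r : ℚ) / 2) ^ (2 * j - 1) * 5 ^ j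
            * (fibZ (r * (2 * (n : ℤ) - 2 * j + 1)) : ℚ))
        * lucZ r
      = 2 * lucZ (r * (2 * (n : ℤ) + 1)) := by
  apply Rat.cast_injective (α := ℝ)
  push_cast
  have h5 (k : ℕ) : (5 : ℝ) ^ k = √5 ^ (2 * k) := by rw [pow_mul, sq_sqrt (by norm_num)]
  have heven : ∀ j ∈ range (n + 1),
      ((fibZ r : ℝ) / 2) ^ (2 * j) * 5 ^ j * lucZ (2 * r * ((n : ℤ) - j))
        = ((fibZ r : ℝ) / 2 * √5) ^ (2 * j)
          * ((φ ^ r) ^ (2 * n - 2 * j) + (ψ ^ r) ^ (2 * n - 2 * j)) := by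
    intro j hj
    have hj : 2 * j ≤ 2 * n := by have := mem_range.mp hj; omega
    rw [show 2 * r * ((n : ℤ) - j) = r * (2 * n - 2 * j : ℕ) by
        rw [Nat.cast_sub hj]; push_cast; ring,
      coe_lucZ_mul_natCast, h5, mul_pow]
  have hodd : ∀ i ∈ range n,
      ((fibZ r : ℝ) / 2) ^ (2 * (i + 1) - 1) * 5 ^ (i + 1)
          * fibZ (r * (2 * (n : ℤ) - 2 * (i + 1 : ℕ) + 1))
        = ((fibZ r : ℝ) / 2 * √5) ^ (2 * i + 1)
          * ((φ ^ r) ^ (2 * n - (2 * i + 1)) - (ψ ^ r) ^ (2 * n - (2 * i + 1))) := by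
    intro i hi
    have hi : 2 * i + 1 ≤ 2 * n := by have := mem_range.mp hi; omega
    rw [show r * (2 * (n : ℤ) - 2 * (i + 1 : ℕ) + 1) = r * (2 * n - (2 * i + 1) : ℕ) by
        rw [Nat.cast_sub hi]; push_cast; ring,
      ← sqrt_five_mul_coe_fibZ_mul_natCast, h5, show 2 * (i + 1) - 1 = 2 * i + 1 by omega,
      show 2 * (i + 1) = 2 * i + 1 + 1 by ring, pow_succ, mul_pow]
    ring
  have hd : 2 * ((fibZ r : ℝ) / 2 * √5) = φ ^ r - ψ ^ r := by
    rw [coe_fibZ_eq]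
    field_simp
  rw [sum_congr rfl heven, sum_Icc_one_eq_sum_range_succ, sum_congr rfl hodd, coe_lucZ_eq,
    show 2 * (n : ℤ) + 1 = (2 * n + 1 : ℕ) by push_cast; rfl, coe_lucZ_mul_natCast, mul_comm]
  exact add_mul_sum_even_odd_of_two_mul_eq_sub hd n

theorem thm2_lucas_odd_sum (r : ℤ) (n : ℕ) :
    (∑ j ∈ Finset.range (2 * n + 1),
        (-1 : ℚ) ^ ((j : ℤ) * (r + 1)) * (lucZ (2 * r * ((n : ℤ) - j)) : ℚ)
      = (∑ j ∈ Finset.range (n + 1),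
          ((fibZ r : ℚ) / 2) ^ (2 * j) * 5 ^ j * (lucZ (2 * r * ((n : ℤ) - j)) : ℚ))
        + ∑ j ∈ Finset.Icc 1 n,
          ((fibZ r : ℚ) / 2) ^ (2 * j - 1) * 5 ^ j
            * (fibZ (r * (2 * (n : ℤ) - 2 * j + 1)) : ℚ)) ∧
    (∑ j ∈ Finset.range (2 * n + 1),
        (-1 : ℚ) ^ ((j : ℤ) * (r + 1)) * (lucZ (2 * r * ((n : ℤ) - j)) : ℚ)
      = 2 * (lucZ (r * (2 * (n : ℤ) + 1)) : ℚ) / (lucZ r : ℚ)) := by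
  have hL : (lucZ r : ℚ) ≠ 0 := by exact_mod_cast lucZ_ne_zero r
  have hA := alternating_lucZ_sum_mul_lucZ r n
  have hB := fibZ_lucZ_sum_mul_lucZ r n
  exact ⟨mul_right_cancel₀ hL (hA.trans hB.symm), by rw [eq_div_iff hL, hA]⟩
end

section
/- For every nonzero integer r and every positive integer n, the integer F_r² + F_r·F_{r−1} − F_{r−1}² divides both F_r^{n+2} L_n + F_{r−1} F_r^{n+1} L_{n+1} + F_r F_{r−1}^{n+1} − 2 F_{r−1}^{n+2} and F_r^{n+2} F_n + F_{r−1} F_r^{n+1} F_{n+1} − F_r F_{r−1}^{n+1} (divisibility in the ring of integers). -/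
lemma fibZ_coe (n : ℕ) : fibZ (n : ℤ) = (Nat.fib n : ℤ) := by
  simp [fibZ]

lemma key (a b : ℤ) (n : ℕ) :
    ((a ^ 2 + a * b - b ^ 2) ∣
      a ^ (n + 1) * (a * Nat.fib n + b * Nat.fib (n + 1)) - a * b ^ (n + 1)) ∧
    ((a ^ 2 + a * b - b ^ 2) ∣
      a ^ (n + 1) * (a * Nat.fib (n + 1) + b * Nat.fib (n + 2)) - b ^ (n + 2)) := by
  induction n with
  | zero =>
    constructor
    · simp
    · refine ⟨1, ?_⟩
      simp [Nat.fib]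
      ring
  | succ m ih =>
    obtain ⟨⟨c, hc⟩, ⟨d, hd⟩⟩ := ih
    have h2 : (Nat.fib (m + 1 + 1) : ℤ) = Nat.fib m + Nat.fib (m + 1) := by
      rw [show m + 1 + 1 = m + 2 from rfl, Nat.fib_add_two]; push_cast; ring
    have h3 : (Nat.fib (m + 1 + 2) : ℤ)
        = Nat.fib (m + 1) + (Nat.fib m + Nat.fib (m + 1)) := by
      have e := Nat.fib_add_two (n := m + 1)
      have f := Nat.fib_add_two (n := m)
      push_cast at e f ⊢
      omega
    have hd' : a ^ (m + 1) * (a * Nat.fib (m + 1)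
        + b * ((Nat.fib m : ℤ) + Nat.fib (m + 1))) - b ^ (m + 2)
        = (a ^ 2 + a * b - b ^ 2) * d := by rw [← h2]; exact hd
    constructor
    · refine ⟨a * d, ?_⟩
      rw [h2]
      linear_combination a * hd'
    · refine ⟨a * c + a * d + b ^ (m + 1), ?_⟩
      rw [h2, h3]
      linear_combination a * hc + a * hd'

theorem cor_divisibility (r : ℤ) (hr : r ≠ 0) (n : ℕ) (hn : 0 < n) :
    ((fibZ r ^ 2 + fibZ r * fibZ (r - 1) - fibZ (r - 1) ^ 2)
      ∣ fibZ r ^ (n + 2) * lucZ (n : ℤ)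
        + fibZ (r - 1) * fibZ r ^ (n + 1) * lucZ ((n : ℤ) + 1)
        + fibZ r * fibZ (r - 1) ^ (n + 1)
        - 2 * fibZ (r - 1) ^ (n + 2)) ∧
    ((fibZ r ^ 2 + fibZ r * fibZ (r - 1) - fibZ (r - 1) ^ 2)
      ∣ fibZ r ^ (n + 2) * fibZ (n : ℤ)
        + fibZ (r - 1) * fibZ r ^ (n + 1) * fibZ ((n : ℤ) + 1)
        - fibZ r * fibZ (r - 1) ^ (n + 1)) := by
  set a := fibZ r with ha
  set b := fibZ (r - 1) with hb
  obtain ⟨m, rfl⟩ : ∃ m, n = m + 1 := ⟨n - 1, (Nat.succ_pred_eq_of_pos hn).symm⟩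
  obtain ⟨⟨c, hc⟩, ⟨d, hd⟩⟩ := key a b (m + 1)
  -- cast facts
  have e1 : ((m + 1 : ℕ) : ℤ) + 1 = ((m + 2 : ℕ) : ℤ) := by push_cast; ring
  have e2 : ((m + 1 : ℕ) : ℤ) - 1 = (m : ℤ) := by push_cast; ring
  have e3 : ((m + 2 : ℕ) : ℤ) + 1 = ((m + 3 : ℕ) : ℤ) := by push_cast; ring
  have e4 : ((m + 2 : ℕ) : ℤ) - 1 = ((m + 1 : ℕ) : ℤ) := by push_cast; ring
  have hl1 : lucZ ((m + 1 : ℕ) : ℤ) = (Nat.fib (m + 2) : ℤ) + Nat.fib m := by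
    rw [lucZ, e1, e2, fibZ_coe, fibZ_coe]
  have hl2 : lucZ (((m + 1 : ℕ) : ℤ) + 1) = (Nat.fib (m + 3) : ℤ) + Nat.fib (m + 1) := by
    rw [lucZ, e1, e3, e4, fibZ_coe, fibZ_coe]
  have hf1 : fibZ ((m + 1 : ℕ) : ℤ) = (Nat.fib (m + 1) : ℤ) := fibZ_coe _
  have hf2 : fibZ (((m + 1 : ℕ) : ℤ) + 1) = (Nat.fib (m + 2) : ℤ) := by
    rw [e1, fibZ_coe]
  have frec1 : (Nat.fib (m + 2) : ℤ) = Nat.fib m + Nat.fib (m + 1) := by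
    rw [Nat.fib_add_two]; push_cast; ring
  have frec2 : (Nat.fib (m + 3) : ℤ) = Nat.fib (m + 1) + Nat.fib (m + 2) := by
    rw [show m + 3 = (m + 1) + 2 from rfl, Nat.fib_add_two]; push_cast; ring
  constructor
  · refine ⟨2 * d - c, ?_⟩
    rw [hl1, hl2, frec2, frec1]
    have : a ^ (m + 1 + 2) * ((Nat.fib m : ℤ) + Nat.fib (m + 1) + Nat.fib m)
          + b * a ^ (m + 1 + 1) * ((Nat.fib (m + 1) : ℤ)
            + ((Nat.fib m : ℤ) + Nat.fib (m + 1)) + Nat.fib (m + 1))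
          + a * b ^ (m + 1 + 1) - 2 * b ^ (m + 1 + 2)
        = 2 * (a ^ (m + 1 + 1) * (a * Nat.fib (m + 1 + 1) + b * Nat.fib (m + 1 + 2))
              - b ^ (m + 1 + 2))
          - (a ^ (m + 1 + 1) * (a * Nat.fib (m + 1) + b * Nat.fib (m + 1 + 1))
              - a * b ^ (m + 1 + 1)) := by
      rw [show m + 1 + 2 = m + 3 from rfl, frec2, frec1]
      ring
    rw [this, hc, hd]; ring
  · refine ⟨c, ?_⟩
    rw [hf1, hf2]
    have : a ^ (m + 1 + 2) * (Nat.fib (m + 1) : ℤ)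
          + b * a ^ (m + 1 + 1) * (Nat.fib (m + 2) : ℤ) - a * b ^ (m + 1 + 1)
        = a ^ (m + 1 + 1) * (a * Nat.fib (m + 1) + b * Nat.fib (m + 1 + 1))
          - a * b ^ (m + 1 + 1) := by ring
    rw [this, hc]
end

section
/- For every complex number x and every non-negative integer n, Σ_{j=0}^{n} (−1)^j L_{n−2j}(x) = Σ_{j=0}^{n} (x/2)^j L_{n−j}(x), and the common value of these two sums equals 2·F_{n+1}(x). -/
open Finset

/-- Fibonacci polynomials at `x`, natural index. -/
def fibPolyAux (x : ℂ) : ℕ → ℂ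
  | 0 => 0
  | 1 => 1
  | n + 2 => x * fibPolyAux x (n + 1) + fibPolyAux x n

/-- Fibonacci polynomials at `x`, integer index:
`F (-n) (x) = (-1)^(n+1) * F n (x)`. -/
def fibPoly (x : ℂ) (n : ℤ) : ℂ :=
  if 0 ≤ n then fibPolyAux x n.toNat else (-1) ^ (n.natAbs + 1) * fibPolyAux x n.natAbs

/-- Lucas polynomials at `x`, integer index: `L n (x) = F (n+1) (x) + F (n-1) (x)`. -/
def lucasPoly (x : ℂ) (n : ℤ) : ℂ := fibPoly x (n + 1) + fibPoly x (n - 1)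

lemma fibPoly_natCast (x : ℂ) (n : ℕ) : fibPoly x (n : ℤ) = fibPolyAux x n := by
  simp [fibPoly]

lemma fibPoly_neg (x : ℂ) (n : ℕ) :
    fibPoly x (-(n : ℤ)) = (-1) ^ (n + 1) * fibPolyAux x n := by
  cases n with
  | zero => simp [fibPoly, fibPolyAux]
  | succ m =>
      have h : ¬ (0 : ℤ) ≤ -(((m + 1 : ℕ)) : ℤ) := by push_cast; omega
      have hn : ((-(((m + 1 : ℕ)) : ℤ)).natAbs) = m + 1 := by omega
      rw [fibPoly, if_neg h, hn]

lemma lucasPoly_succ (x : ℂ) (n : ℕ) :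
    lucasPoly x ((n : ℤ) + 1) = fibPolyAux x (n + 2) + fibPolyAux x n := by
  have h1 : ((n : ℤ) + 1) + 1 = ((n + 2 : ℕ) : ℤ) := by push_cast; ring
  have h2 : ((n : ℤ) + 1) - 1 = ((n : ℕ) : ℤ) := by ring
  rw [lucasPoly, h1, h2, fibPoly_natCast, fibPoly_natCast]

lemma second_sum (x : ℂ) (n : ℕ) :
    ∑ j ∈ Finset.range (n + 1), (x / 2) ^ j * lucasPoly x ((n : ℤ) - j)
      = 2 * fibPolyAux x (n + 1) := by
  induction n with
  | zero =>
      have h1 : fibPoly x 1 = 1 := by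
        rw [show (1 : ℤ) = ((1 : ℕ) : ℤ) from rfl, fibPoly_natCast]; rfl
      have h2 : fibPoly x (-1) = 1 := by
        rw [show (-1 : ℤ) = -((1 : ℕ) : ℤ) from rfl, fibPoly_neg]
        norm_num [fibPolyAux]
      have : lucasPoly x 0 = 2 := by
        rw [lucasPoly]; norm_num [h1, h2]
      simp [this, fibPolyAux]
  | succ n ih =>
      push_cast
      rw [Finset.sum_range_succ' (fun j => (x / 2) ^ j * lucasPoly x (((n : ℤ) + 1) - j))]
      calc (∑ i ∈ Finset.range (n + 1), (x / 2) ^ (i + 1) * lucasPoly x (((n : ℤ) + 1) - (↑i + 1)))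
            + (x / 2) ^ 0 * lucasPoly x (((n : ℤ) + 1) - (0 : ℕ))
          = (x / 2) * (∑ j ∈ Finset.range (n + 1), (x / 2) ^ j * lucasPoly x ((n : ℤ) - j))
            + lucasPoly x ((n : ℤ) + 1) := by
            rw [Finset.mul_sum]
            congr 1
            · refine Finset.sum_congr rfl fun i _ => ?_
              have : ((n : ℤ) + 1) - ((i : ℤ) + 1) = (n : ℤ) - i := by ring
              rw [this]; ring
            · simp
        _ = (x / 2) * (2 * fibPolyAux x (n + 1)) + (fibPolyAux x (n + 2) + fibPolyAux x n) := by
            rw [ih, lucasPoly_succ]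
        _ = 2 * fibPolyAux x (n + 2) := by
            rw [show fibPolyAux x (n + 2) = x * fibPolyAux x (n + 1) + fibPolyAux x n from rfl]
            ring

lemma first_sum (x : ℂ) (n : ℕ) :
    ∑ j ∈ Finset.range (n + 1), (-1 : ℂ) ^ j * lucasPoly x ((n : ℤ) - 2 * j)
      = 2 * fibPolyAux x (n + 1) := by
  have key : ∀ j : ℕ, (-1 : ℂ) ^ j * lucasPoly x ((n : ℤ) - 2 * j)
      = (fun j : ℕ => (-1 : ℂ) ^ j * fibPoly x ((n : ℤ) - 2 * j + 1)) j
        - (fun j : ℕ => (-1 : ℂ) ^ j * fibPoly x ((n : ℤ) - 2 * j + 1)) (j + 1) := by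
    intro j
    simp only [lucasPoly]
    have h1 : ((n : ℤ) - 2 * (j + 1 : ℕ) + 1) = (n : ℤ) - 2 * j - 1 := by push_cast; ring
    rw [h1, pow_succ]
    ring
  calc ∑ j ∈ Finset.range (n + 1), (-1 : ℂ) ^ j * lucasPoly x ((n : ℤ) - 2 * j)
      = ∑ j ∈ Finset.range (n + 1),
          ((fun j : ℕ => (-1 : ℂ) ^ j * fibPoly x ((n : ℤ) - 2 * j + 1)) j
           - (fun j : ℕ => (-1 : ℂ) ^ j * fibPoly x ((n : ℤ) - 2 * j + 1)) (j + 1)) :=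
        Finset.sum_congr rfl fun j _ => key j
    _ = (-1 : ℂ) ^ 0 * fibPoly x ((n : ℤ) - 2 * (0 : ℕ) + 1)
        - (-1 : ℂ) ^ (n + 1) * fibPoly x ((n : ℤ) - 2 * (n + 1 : ℕ) + 1) :=
        Finset.sum_range_sub' _ (n + 1)
    _ = 2 * fibPolyAux x (n + 1) := by
        have h0 : (n : ℤ) - 2 * ((0 : ℕ) : ℤ) + 1 = ((n + 1 : ℕ) : ℤ) := by push_cast; ring
        have h1 : (n : ℤ) - 2 * ((n + 1 : ℕ) : ℤ) + 1 = -((n + 1 : ℕ) : ℤ) := by push_cast; ring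
        rw [h0, h1, fibPoly_natCast, fibPoly_neg]
        have : (-1 : ℂ) ^ (n + 1) * ((-1 : ℂ) ^ (n + 1 + 1)) = -1 := by
          rw [← pow_add]
          have : (n + 1) + (n + 1 + 1) = 2 * (n + 1) + 1 := by ring
          rw [this, pow_succ, pow_mul]
          norm_num
        rw [pow_zero, one_mul, ← mul_assoc, this]
        ring

theorem fibpol_thm1 (x : ℂ) (n : ℕ) :
    (∑ j ∈ Finset.range (n + 1), (-1 : ℂ) ^ j * lucasPoly x ((n : ℤ) - 2 * j)
      = ∑ j ∈ Finset.range (n + 1), (x / 2) ^ j * lucasPoly x ((n : ℤ) - j)) ∧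
    (∑ j ∈ Finset.range (n + 1), (-1 : ℂ) ^ j * lucasPoly x ((n : ℤ) - 2 * j)
      = 2 * fibPoly x ((n : ℤ) + 1)) := by
  have h1 := first_sum x n
  have h2 := second_sum x n
  have h3 : fibPoly x ((n : ℤ) + 1) = fibPolyAux x (n + 1) := by
    have : (n : ℤ) + 1 = ((n + 1 : ℕ) : ℤ) := by push_cast; ring
    rw [this, fibPoly_natCast]
  exact ⟨h1.trans h2.symm, by rw [h1, h3]⟩
end

section
/- For every nonzero complex number x and every non-negative integer n, Σ_{j=0}^{n} L_{2(n−2j)}(x) = Σ_{j=0}^{n} ((x²+2)/2)^j L_{2(n−j)}(x), and the common value of these two sums equals (2/x)·F_{2(n+1)}(x). -/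
open Finset

lemma aux_rec (x : ℂ) (m : ℕ) :
    fibPolyAux x (m+2) = x * fibPolyAux x (m+1) + fibPolyAux x m := rfl

lemma fib_nat (x : ℂ) (m : ℕ) : fibPoly x (m:ℤ) = fibPolyAux x m := by
  simp [fibPoly]

lemma fib_neg (x : ℂ) (m : ℕ) :
    fibPoly x (-(m:ℤ)) = (-1)^(m+1) * fibPoly x (m:ℤ) := by
  match m with
  | 0 => simp [fibPoly, fibPolyAux]
  | k+1 =>
    rw [fib_nat]
    rw [fibPoly, if_neg (by omega)]
    norm_num [show ((-1:ℤ) + -(k:ℤ)).natAbs = k+1 by omega]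

lemma fib_rec (x : ℂ) (n : ℤ) :
    fibPoly x (n+2) = x * fibPoly x (n+1) + fibPoly x n := by
  obtain ⟨m, rfl | rfl⟩ := n.eq_nat_or_neg
  · rw [show (m:ℤ)+2 = ((m+2:ℕ):ℤ) by omega,
       show (m:ℤ)+1 = ((m+1:ℕ):ℤ) by omega, fib_nat, fib_nat, fib_nat]
    exact aux_rec x m
  · match m with
    | 0 =>
      norm_num
      rw [show (2:ℤ) = ((2:ℕ):ℤ) by rfl, show (1:ℤ) = ((1:ℕ):ℤ) by rfl,
        show (0:ℤ) = ((0:ℕ):ℤ) by rfl, fib_nat, fib_nat, fib_nat]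
      simp [fibPolyAux]
    | 1 =>
      rw [show -((1:ℕ):ℤ)+2 = ((1:ℕ):ℤ) by omega,
        show -((1:ℕ):ℤ)+1 = ((0:ℕ):ℤ) by omega,
        fib_nat, fib_nat, fib_neg x 1, fib_nat]
      simp [fibPolyAux]
    | 2 =>
      rw [show -((2:ℕ):ℤ)+2 = ((0:ℕ):ℤ) by omega,
        show -((2:ℕ):ℤ)+1 = -((1:ℕ):ℤ) by omega,
        fib_nat, fib_neg x 1, fib_neg x 2, fib_nat, fib_nat]
      simp [fibPolyAux]
      ring
    | (k+3) =>
      rw [show -((k+3:ℕ):ℤ)+2 = -((k+1:ℕ):ℤ) by omega,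
        show -((k+3:ℕ):ℤ)+1 = -((k+2:ℕ):ℤ) by omega,
        fib_neg, fib_neg, fib_neg, fib_nat, fib_nat, fib_nat]
      have h := aux_rec x (k+1)
      linear_combination ((-1:ℂ))^(k+3) * h

lemma fib_rec' (x : ℂ) {a b c : ℤ} (h1 : a = c+2) (h2 : b = c+1) :
    fibPoly x a = x * fibPoly x b + fibPoly x c := by
  subst h1 h2; exact fib_rec x c

lemma lucas_eq (x : ℂ) {n a b : ℤ} (ha : a = n+1) (hb : b = n-1) :
    lucasPoly x n = fibPoly x a + fibPoly x b := by
  subst ha hb; rfl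

lemma key1 (x : ℂ) (m : ℤ) {a b : ℤ} (ha : a = 2*m+2) (hb : b = 2*m-2) :
    x * lucasPoly x (2*m) = fibPoly x a - fibPoly x b := by
  subst ha hb
  rw [lucas_eq x (n := 2*m) rfl rfl]
  have h1 := fib_rec' x (a := 2*m+2) (b := 2*m+1) (c := 2*m) (by ring) (by ring)
  have h2 := fib_rec' x (a := 2*m) (b := 2*m-1) (c := 2*m-2) (by ring) (by ring)
  linear_combination -h1 - h2

lemma key2 (x : ℂ) (a : ℤ) {b c : ℤ} (hb : b = a+2) (hc : c = a-2) :
    (x^2+2) * fibPoly x a = fibPoly x b + fibPoly x c := by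
  subst hb hc
  have h1 := fib_rec' x (a := a+2) (b := a+1) (c := a) (by ring) (by ring)
  have h2 := fib_rec' x (a := a+1) (b := a) (c := a-1) (by ring) (by ring)
  have h3 := fib_rec' x (a := a) (b := a-1) (c := a-2) (by ring) (by ring)
  linear_combination -h1 - x*h2 + h3

lemma S1_eq (x : ℂ) (hx : x ≠ 0) (n : ℕ) :
    ∑ j ∈ Finset.range (n + 1), lucasPoly x (2 * ((n : ℤ) - 2 * j))
      = 2 / x * fibPoly x (2 * ((n : ℤ) + 1)) := by
  have key : x * ∑ j ∈ Finset.range (n + 1), lucasPoly x (2 * ((n : ℤ) - 2 * j))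
      = 2 * fibPoly x (2 * ((n : ℤ) + 1)) := by
    rw [Finset.mul_sum]
    have hterm : ∀ j : ℕ, x * lucasPoly x (2 * ((n : ℤ) - 2 * j))
        = fibPoly x (2*(n:ℤ) - 4*(j:ℤ) + 2) - fibPoly x (2*(n:ℤ) - 4*((j:ℕ)+1:ℕ) + 2) := by
      intro j
      exact key1 x ((n:ℤ) - 2*j) (by ring) (by push_cast; ring)
    calc ∑ j ∈ Finset.range (n + 1), x * lucasPoly x (2 * ((n : ℤ) - 2 * j))
        = ∑ j ∈ Finset.range (n + 1),
            ((fun k : ℕ => fibPoly x (2*(n:ℤ) - 4*(k:ℤ) + 2)) j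
              - (fun k : ℕ => fibPoly x (2*(n:ℤ) - 4*(k:ℤ) + 2)) (j+1)) := by
          refine Finset.sum_congr rfl fun j _ => ?_
          simpa using hterm j
      _ = (fun k : ℕ => fibPoly x (2*(n:ℤ) - 4*(k:ℤ) + 2)) 0
            - (fun k : ℕ => fibPoly x (2*(n:ℤ) - 4*(k:ℤ) + 2)) (n+1) :=
          Finset.sum_range_sub' _ _
      _ = fibPoly x (((2*n+2:ℕ):ℤ)) - fibPoly x (-((2*n+2:ℕ):ℤ)) := by
          simp only []
          rw [show 2*(n:ℤ) - 4*((0:ℕ):ℤ) + 2 = ((2*n+2:ℕ):ℤ) by push_cast; ring,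
            show 2*(n:ℤ) - 4*(((n+1:ℕ)):ℤ) + 2 = -((2*n+2:ℕ):ℤ) by push_cast; ring]
      _ = 2 * fibPoly x (2 * ((n : ℤ) + 1)) := by
          rw [fib_neg, show (-1:ℂ)^(2*n+2+1) = -1 by
            simpa using Odd.neg_one_pow ⟨n+1, by ring⟩,
            show ((2*n+2:ℕ):ℤ) = 2*((n:ℤ)+1) by push_cast; ring]
          ring
  field_simp
  linear_combination key

lemma lucas_zero (x : ℂ) : lucasPoly x 0 = 2 := by
  rw [lucas_eq x (n := 0) (a := ((1:ℕ):ℤ)) (b := -((1:ℕ):ℤ)) (by norm_num) (by norm_num),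
    fib_neg, fib_nat]
  norm_num [fibPolyAux]

lemma S2_eq (x : ℂ) (hx : x ≠ 0) (n : ℕ) :
    ∑ j ∈ Finset.range (n + 1), ((x ^ 2 + 2) / 2) ^ j * lucasPoly x (2 * ((n : ℤ) - j))
      = 2 / x * fibPoly x (2 * ((n : ℤ) + 1)) := by
  induction n with
  | zero =>
      rw [Finset.sum_range_one]
      norm_num [lucas_zero]
      rw [show (2:ℤ) = ((2:ℕ):ℤ) from rfl, fib_nat]
      rw [show fibPolyAux x 2 = x by simp [fibPolyAux]]
      field_simp
  | succ n ih =>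
      rw [Finset.sum_range_succ']
      have hshift : ∀ i : ℕ, ((x ^ 2 + 2) / 2) ^ (i+1) * lucasPoly x (2 * (((n+1:ℕ)) - ((i+1:ℕ)) : ℤ))
          = ((x ^ 2 + 2) / 2) * (((x ^ 2 + 2) / 2) ^ i * lucasPoly x (2 * ((n:ℤ) - i))) := by
        intro i
        rw [show (2 * (((n+1:ℕ)) - ((i+1:ℕ)) : ℤ)) = 2 * ((n:ℤ) - i) by push_cast; ring]
        ring
      calc (∑ i ∈ Finset.range (n+1), ((x ^ 2 + 2) / 2) ^ (i+1) * lucasPoly x (2 * (((n+1:ℕ):ℤ) - (i+1:ℕ))))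
            + ((x ^ 2 + 2) / 2) ^ 0 * lucasPoly x (2 * (((n+1:ℕ):ℤ) - (0:ℕ)))
          = ((x ^ 2 + 2) / 2) * (∑ i ∈ Finset.range (n+1), ((x ^ 2 + 2) / 2) ^ i * lucasPoly x (2 * ((n:ℤ) - i)))
            + lucasPoly x (2*(n:ℤ)+2) := by
            rw [Finset.mul_sum]
            congr 1
            · exact Finset.sum_congr rfl fun i _ => by simpa using hshift i
            · rw [show (2 * (((n+1:ℕ):ℤ) - (0:ℕ))) = 2*(n:ℤ)+2 by push_cast; ring]
              ring
        _ = 2 / x * fibPoly x (2 * (((n+1:ℕ):ℤ) + 1)) := by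
            rw [ih]
            have h1 := key1 x ((n:ℤ)+1) (a := 2*(n:ℤ)+4) (b := 2*(n:ℤ)) (by ring) (by ring)
            rw [show 2*((n:ℤ)+1) = 2*(n:ℤ)+2 by ring] at h1 ⊢
            have h2 := key2 x (2*(n:ℤ)+2) (b := 2*(n:ℤ)+4) (c := 2*(n:ℤ)) (by ring) (by ring)
            rw [show 2*(((n+1:ℕ):ℤ)+1) = 2*(n:ℤ)+4 by push_cast; ring]
            refine mul_left_cancel₀ hx ?_
            have eA : x * (2/x * fibPoly x (2*(n:ℤ)+2)) = 2 * fibPoly x (2*(n:ℤ)+2) := by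
              field_simp
            have eB : x * (2/x * fibPoly x (2*(n:ℤ)+4)) = 2 * fibPoly x (2*(n:ℤ)+4) := by
              field_simp
            calc x * ((x^2+2)/2 * (2/x * fibPoly x (2*(n:ℤ)+2)) + lucasPoly x (2*(n:ℤ)+2))
                = (x^2+2)/2 * (x * (2/x * fibPoly x (2*(n:ℤ)+2))) + x * lucasPoly x (2*(n:ℤ)+2) := by
                  ring
              _ = (x^2+2)/2 * (2 * fibPoly x (2*(n:ℤ)+2)) + x * lucasPoly x (2*(n:ℤ)+2) := by
                  rw [eA]
              _ = 2 * fibPoly x (2*(n:ℤ)+4) := by linear_combination h1 + h2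
              _ = x * (2/x * fibPoly x (2*(n:ℤ)+4)) := eB.symm

theorem fibpol_thm2 (x : ℂ) (hx : x ≠ 0) (n : ℕ) :
    (∑ j ∈ Finset.range (n + 1), lucasPoly x (2 * ((n : ℤ) - 2 * j))
      = ∑ j ∈ Finset.range (n + 1), ((x ^ 2 + 2) / 2) ^ j * lucasPoly x (2 * ((n : ℤ) - j))) ∧
    (∑ j ∈ Finset.range (n + 1), lucasPoly x (2 * ((n : ℤ) - 2 * j))
      = 2 / x * fibPoly x (2 * ((n : ℤ) + 1))) := by
  exact ⟨(S1_eq x hx n).trans (S2_eq x hx n).symm, S1_eq x hx n⟩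
end

section
/- Let n be a non-negative integer and m, r positive integers. If m is odd, then the integer F_m^n·L_m·F_{rm} divides F_{m(r+1)}^{n+1} − F_{m(r−1)}^{n+1}; if m is even, then F_m^n·L_m·F_{rm} divides F_{m(r+1)}^{n+1} + (−1)^n·F_{m(r−1)}^{n+1} (divisibility in the ring of integers). -/
open Nat

lemma fibZ_cassini (b : ℕ) : (fib (b+1):ℤ)^2 - fib b * fib (b+2) = (-1)^b := by
  induction b with
  | zero => simp
  | succ b ih =>
    have h2 : fib (b+3) = fib (b+1) + fib (b+2) := fib_add_two
    have h1 : fib (b+2) = fib b + fib (b+1) := fib_add_two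
    push_cast [h2, h1] at *
    ring_nf at *
    linarith [ih]

lemma fibZ_sub (a b : ℕ) (h : b ≤ a) :
    (-1:ℤ)^b * (fib (a-b) : ℤ) = fib a * fib (b+1) - fib (a+1) * fib b := by
  rcases Nat.eq_or_lt_of_le h with rfl | hlt
  · simp [mul_comm]
  · set c := a - b with hc
    have hc1 : 1 ≤ c := by omega
    have ha : a = (c-1) + b + 1 := by omega
    have ha1 : a + 1 = (c-1) + (b+1) + 1 := by omega
    have e1 : fib a = fib (c-1) * fib b + fib c * fib (b+1) := by
      rw [ha, fib_add, show c-1+1 = c from by omega]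
    have e2 : fib (a+1) = fib (c-1) * fib (b+1) + fib c * fib (b+2) := by
      rw [ha1, fib_add, show c-1+1 = c from by omega]
    have := fibZ_cassini b
    push_cast [e1, e2]
    nlinarith [this]

lemma fibZ_key (a b : ℕ) (hb : 1 ≤ b) (h : b ≤ a) :
    (fib (a+b) : ℤ) + (-1:ℤ)^b * fib (a-b) = fib a * (fib (b+1) + fib (b-1)) := by
  have e1 : fib (a+b) = fib (a-1) * fib b + fib a * fib (b+1) := by
    have : a + b = (a-1) + b + 1 := by omega
    rw [this, fib_add, show a-1+1 = a from by omega]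
  have e2 := fibZ_sub a b h
  have e3 : fib (a+1) = fib (a-1) + fib a := by
    have : a + 1 = (a-1) + 2 := by omega
    rw [this, fib_add_two, show a-1+1 = a from by omega]
  have e4 : fib (b+1) = fib (b-1) + fib b := by
    have : b + 1 = (b-1) + 2 := by omega
    rw [this, fib_add_two, show b-1+1 = b from by omega]
  push_cast [e1, e3, e4] at *
  linarith [e2]

lemma aux_dvd (n : ℕ) (F L G X Y : ℤ) (hX : F ∣ X) (hY : F ∣ Y) (hXY : X - Y = L * G) :
    F ^ n * L * G ∣ X ^ (n+1) - Y ^ (n+1) := by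
  obtain ⟨x, rfl⟩ := hX
  obtain ⟨y, rfl⟩ := hY
  obtain ⟨S, hS⟩ := sub_dvd_pow_sub_pow x y (n+1)
  refine ⟨S, ?_⟩
  have h1 : (F*x)^(n+1) - (F*y)^(n+1) = F^(n+1) * (x^(n+1) - y^(n+1)) := by ring
  rw [h1, hS]
  have h2 : F * (x - y) = L * G := by linarith [hXY]
  calc F^(n+1) * ((x-y)*S) = F^n * (F*(x-y)) * S := by ring
    _ = F^n * (L*G) * S := by rw [h2]
    _ = F^n * L * G * S := by ring

lemma fibZ_ofNat (k : ℕ) : fibZ (k:ℤ) = fib k := by simp [fibZ]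

theorem cor_fibpoly_dvd (n : ℕ) (m r : ℤ) (hm : 0 < m) (hr : 0 < r) :
    (Odd m →
      fibZ m ^ n * lucZ m * fibZ (r * m)
        ∣ fibZ (m * (r + 1)) ^ (n + 1) - fibZ (m * (r - 1)) ^ (n + 1)) ∧
    (Even m →
      fibZ m ^ n * lucZ m * fibZ (r * m)
        ∣ fibZ (m * (r + 1)) ^ (n + 1) + (-1) ^ n * fibZ (m * (r - 1)) ^ (n + 1)) := by
  set M := m.toNat with hMdef
  set R := r.toNat with hRdef
  have hM : (M:ℤ) = m := Int.toNat_of_nonneg hm.le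
  have hR : (R:ℤ) = r := Int.toNat_of_nonneg hr.le
  have hM1 : 1 ≤ M := by omega
  have hR1 : 1 ≤ R := by omega
  have em : fibZ m = fib M := by rw [← hM, fibZ_ofNat]
  have eluc : lucZ m = (fib (M+1) : ℤ) + fib (M-1) := by
    have h1 : m + 1 = ((M+1:ℕ):ℤ) := by push_cast [hM]; ring
    have h2 : m - 1 = ((M-1:ℕ):ℤ) := by
      push_cast [Nat.cast_sub hM1, hM]; ring
    rw [lucZ, h1, h2, fibZ_ofNat, fibZ_ofNat]
  have erm : fibZ (r*m) = fib (R*M) := by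
    have : r * m = ((R*M:ℕ):ℤ) := by push_cast [hM, hR]; ring
    rw [this, fibZ_ofNat]
  have ep : fibZ (m*(r+1)) = fib (M*R + M) := by
    have : m*(r+1) = ((M*R+M:ℕ):ℤ) := by push_cast [hM, hR]; ring
    rw [this, fibZ_ofNat]
  have hle : M ≤ M*R := Nat.le_mul_of_pos_right M (by omega)
  have en : fibZ (m*(r-1)) = fib (M*R - M) := by
    have : m*(r-1) = ((M*R-M:ℕ):ℤ) := by
      push_cast [Nat.cast_sub hle, hM, hR]; ring
    rw [this, fibZ_ofNat]
  have hdvd1 : (fib M : ℤ) ∣ fib (M*R + M) := by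
    exact_mod_cast Int.natCast_dvd_natCast.mpr (fib_dvd M (M*R+M) ⟨R+1, by ring⟩)
  have hdvd2 : (fib M : ℤ) ∣ fib (M*R - M) := by
    exact_mod_cast Int.natCast_dvd_natCast.mpr (fib_dvd M (M*R-M) (Nat.dvd_sub (dvd_mul_right M R) dvd_rfl))
  have key := fibZ_key (M*R) M hM1 hle
  have hRM : (fib (M*R) : ℤ) = fib (R*M) := by rw [Nat.mul_comm]
  rw [hRM] at key
  constructor
  · intro hodd
    have hoM : Odd M := by rwa [← hM, Int.odd_coe_nat] at hodd
    have hpow : ((-1:ℤ))^M = -1 := Odd.neg_one_pow hoM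
    rw [hpow] at key
    rw [em, eluc, erm, ep, en]
    exact aux_dvd n _ _ _ _ _ hdvd1 hdvd2 (by linarith [key])
  · intro heven
    have heM : Even M := by rwa [← hM, Int.even_coe_nat] at heven
    have hpow : ((-1:ℤ))^M = 1 := Even.neg_one_pow heM
    rw [hpow] at key
    rw [em, eluc, erm, ep, en]
    have h := aux_dvd n (fib M) ((fib (M+1):ℤ) + fib (M-1)) (fib (R*M))
      (fib (M*R+M)) (-(fib (M*R-M))) hdvd1 (hdvd2.neg_right) (by linarith [key])
    have hre : (fib (M*R+M):ℤ)^(n+1) - (-(fib (M*R-M):ℤ))^(n+1)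
        = (fib (M*R+M):ℤ)^(n+1) + (-1)^n * (fib (M*R-M):ℤ)^(n+1) := by
      rw [neg_pow, pow_succ]; ring
    rwa [hre] at h
end
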